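/- Fix integers N, m, s ≥ 1, real numbers Δt and ΔW¹,…,ΔW^m, and C² Hamiltonians H, h₁,…,h_m : ℝ^N × ℝ^N → ℝ. Let real coefficients a_{ij}, ā_{ij}, b_{ij}, b̄_{ij}, α_i, β_i (i,j = 1,…,s) satisfy: α_i ā_{ij} + α_j a_{ji} = α_i α_j, β_i b̄_{ij} + β_j b_{ji} = β_i β_j, β_i ā_{ij} + α_j b_{ji} = β_i α_j, and α_i b̄_{ij} + β_j a_{ji} = α_i β_j for all i,j. Let U ⊆ ℝ^N × ℝ^N be open and let Q_i, P_i : U → ℝ^N (i = 1,…,s) be differentiable maps satisfying, for every (q,p) ∈ U, the unforced stage equations Q_i = q + Δt Σ_j a_{ij} ∂H/∂p(Q_j,P_j) + Σ_r ΔW^r Σ_j b_{ij} ∂h_r/∂p(Q_j,P_j) and P_i = p − Δt Σ_j ā_{ij} ∂H/∂q(Q_j,P_j) − Σ_r ΔW^r Σ_j b̄_{ij} ∂h_r/∂q(Q_j,P_j). Define φ : U → ℝ^N × ℝ^N by φ(q,p) = (q₊, p₊) with q₊ = q + Δt Σ_i α_i ∂H/∂p(Q_i,P_i) + Σ_r ΔW^r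 Σ_i β_i ∂h_r/∂p(Q_i,P_i) and p₊ = p − Δt Σ_i α_i ∂H/∂q(Q_i,P_i) − Σ_r ΔW^r Σ_i β_i ∂h_r/∂q(Q_i,P_i). Then φ preserves the canonical symplectic form: Ω( Dφ(z)u, Dφ(z)v ) = Ω(u, v) for all z ∈ U and all u, v ∈ ℝ^N × ℝ^N. (The paper's claim that the Lagrange–d'Alembert partitioned Runge–Kutta methods degenerate to symplectic methods when the forcing terms vanish — condition (QS1) of quasi-symplecticity in Section 3.4.) -/

import Mathlib

/-! Differentiating the stage and update equations expresses the variations of the stages and of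
`(q₊, p₊)` through the Hessian terms `∂_z ∇_q H(Q_i, P_i)` and `∂_z ∇_p H(Q_i, P_i)`. Substituting
the linearised stage equations into `Ω(Dφ u, Dφ v) - Ω(u, v)`, the double sums carry coefficients
such as `α_i ā_ij + α_j a_ji - α_i α_j`, which vanish, and the single sums cancel because the
Hessian of each Hamiltonian is symmetric. Treating the drift `Δt H` and each noise term `ΔW^r h_r`
as members of one family of Hamiltonians merges the four coupling conditions into one. -/

noncomputable section
open scoped BigOperators

abbrev E (N : ℕ) : Type := EuclideanSpace ℝ (Fin N)

/-- Gradient with respect to the first argument. -/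
noncomputable def D1 {N : ℕ} (H : E N × E N → ℝ) (x y : E N) : E N :=
  gradient (fun x' => H (x', y)) x

/-- Gradient with respect to the second argument. -/
noncomputable def D2 {N : ℕ} (H : E N × E N → ℝ) (x y : E N) : E N :=
  gradient (fun y' => H (x, y')) y

/-- The canonical symplectic bilinear form on `ℝ^N × ℝ^N`. -/
noncomputable def Omega {N : ℕ} (u v : E N × E N) : ℝ :=
  (inner ℝ u.1 v.2 : ℝ) - (inner ℝ u.2 v.1 : ℝ)

open scoped RealInnerProductSpace Topology
open Finset (sum_congr sum_comm sum_add_distrib sum_sub_distrib mul_sum smul_sum)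
open ContinuousLinearMap (inl inr inl_apply inr_apply fst snd precomp prod_apply coe_comp coe_fst'
  coe_snd')
open InnerProductSpace (toDual toDual_symm_apply)

section LinearStages

variable {F τ : Type*} [NormedAddCommGroup F] [InnerProductSpace ℝ F] [Fintype τ]

lemma inner_add_sum_sub_sum_eq_of_linear_stages (e : τ → ℝ) (A Abar : τ → τ → ℝ)
    (hcond : ∀ t t', e t * Abar t t' + e t' * A t' t = e t * e t')
    (u₁ v₂ : F) (K L dQ dP : τ → F)
    (hQ : ∀ t, dQ t = u₁ + ∑ t', A t t' • K t')
    (hP : ∀ t, dP t = v₂ - ∑ t', Abar t t' • L t') :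
    ⟪u₁ + ∑ t, e t • K t, v₂ - ∑ t, e t • L t⟫
      = ⟪u₁, v₂⟫ + ∑ t, e t * (⟪K t, dP t⟫ - ⟪dQ t, L t⟫) := by
  have hK : ∀ t, ⟪K t, v₂⟫ = ⟪K t, dP t⟫ + ∑ t', Abar t t' * ⟪K t, L t'⟫ := by
    intro t
    rw [hP t, inner_sub_right, inner_sum]
    simp only [real_inner_smul_right]
    ring
  have hL : ∀ t', ⟪u₁, L t'⟫ = ⟪dQ t', L t'⟫ - ∑ t, A t' t * ⟪K t, L t'⟫ := by
    intro t'
    rw [hQ t', inner_add_left, sum_inner]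
    simp only [real_inner_smul_left]
    ring
  have hcross : ∑ t', ∑ t, e t' * (e t * ⟪K t, L t'⟫)
      = ∑ t, e t * ∑ t', Abar t t' * ⟪K t, L t'⟫ + ∑ t', e t' * ∑ t, A t' t * ⟪K t, L t'⟫ := by
    calc ∑ t', ∑ t, e t' * (e t * ⟪K t, L t'⟫)
        = ∑ t', ∑ t, (e t * Abar t t' + e t' * A t' t) * ⟪K t, L t'⟫ := by
          refine sum_congr rfl fun t' _ => sum_congr rfl fun t _ => ?_
          rw [hcond]
          ring
      _ = ∑ t', ∑ t, e t * (Abar t t' * ⟪K t, L t'⟫) + ∑ t', e t' * ∑ t, A t' t * ⟪K t, L t'⟫ := by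
        simp only [add_mul, sum_add_distrib, mul_sum, mul_assoc]
      _ = _ := by rw [sum_comm]; simp only [mul_sum]
  calc ⟪u₁ + ∑ t, e t • K t, v₂ - ∑ t, e t • L t⟫
      = ⟪u₁, v₂⟫ + ∑ t, e t * ⟪K t, v₂⟫ - ∑ t', e t' * ⟪u₁, L t'⟫
          - ∑ t', ∑ t, e t' * (e t * ⟪K t, L t'⟫) := by
        simp only [inner_add_left, inner_sub_right, inner_sum, sum_inner, real_inner_smul_left,
          real_inner_smul_right, sum_add_distrib, sub_sub]
    _ = _ := by
        simp only [hK, hL, hcross, mul_add, mul_sub, sum_add_distrib, sum_sub_distrib]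
        ring

lemma symplecticForm_eq_of_linear_stages (e : τ → ℝ) (A Abar : τ → τ → ℝ)
    (hcond : ∀ t t', e t * Abar t t' + e t' * A t' t = e t * e t')
    (u v : F × F) (Ku Kv Lu Lv dQu dQv dPu dPv : τ → F)
    (hQu : ∀ t, dQu t = u.1 + ∑ t', A t t' • Ku t')
    (hQv : ∀ t, dQv t = v.1 + ∑ t', A t t' • Kv t')
    (hPu : ∀ t, dPu t = u.2 - ∑ t', Abar t t' • Lu t')
    (hPv : ∀ t, dPv t = v.2 - ∑ t', Abar t t' • Lv t')
    (hsymm : ∀ t, ⟪Lu t, dQv t⟫ + ⟪Ku t, dPv t⟫ = ⟪Lv t, dQu t⟫ + ⟪Kv t, dPu t⟫) :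
    ⟪u.1 + ∑ t, e t • Ku t, v.2 - ∑ t, e t • Lv t⟫
      - ⟪u.2 - ∑ t, e t • Lu t, v.1 + ∑ t, e t • Kv t⟫ = ⟪u.1, v.2⟫ - ⟪u.2, v.1⟫ := by
  rw [real_inner_comm (v.1 + _), real_inner_comm v.1,
    inner_add_sum_sub_sum_eq_of_linear_stages e A Abar hcond u.1 v.2 Ku Lv dQu dPv hQu hPv,
    inner_add_sum_sub_sum_eq_of_linear_stages e A Abar hcond v.1 u.2 Kv Lu dQv dPu hQv hPu]
  have hsum : ∑ t, e t * (⟪Ku t, dPv t⟫ - ⟪dQu t, Lv t⟫)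
      = ∑ t, e t * (⟪Kv t, dPu t⟫ - ⟪dQv t, Lu t⟫) := by
    refine sum_congr rfl fun t _ => congrArg (e t * ·) ?_
    rw [real_inner_comm (Lv t), real_inner_comm (Lu t)]
    linarith [hsymm t]
  rw [hsum]
  ring

end LinearStages

section RieszPrecomp

variable {F G : Type*} [NormedAddCommGroup F] [InnerProductSpace ℝ F] [CompleteSpace F]
  [NormedAddCommGroup G] [NormedSpace ℝ G]

/-- The Riesz representative of `φ ∘ L`; with `L = inl, inr` it writes the partial gradients `D1`,
`D2` as continuous linear images of the derivative, hence differentiable for `C²` functions. -/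
def rieszPrecomp (L : F →L[ℝ] G) : (G →L[ℝ] ℝ) →L[ℝ] F :=
  ((toDual ℝ F).symm.toContinuousLinearEquiv : StrongDual ℝ F ≃L[ℝ] F).toContinuousLinearMap ∘L
    precomp ℝ L

lemma inner_rieszPrecomp_apply (L : F →L[ℝ] G) (φ : G →L[ℝ] ℝ) (x : F) :
    ⟪rieszPrecomp L φ, x⟫ = φ (L x) := by
  simp [rieszPrecomp, toDual_symm_apply]

end RieszPrecomp

section PartialGradients

variable {N : ℕ} {Z : Type*} [NormedAddCommGroup Z] [NormedSpace ℝ Z] {f : E N × E N → ℝ}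

lemma D1_eq_rieszPrecomp {x y : E N} (hf : DifferentiableAt ℝ f (x, y)) :
    D1 f x y = rieszPrecomp (inl ℝ (E N) (E N)) (fderiv ℝ f (x, y)) := by
  have h : HasFDerivAt (fun x' => f (x', y)) (fderiv ℝ f (x, y) ∘L inl ℝ (E N) (E N)) x :=
    hf.hasFDerivAt.comp x (hasFDerivAt_prodMk_left x y)
  rw [D1, gradient, h.fderiv]
  rfl

lemma D2_eq_rieszPrecomp {x y : E N} (hf : DifferentiableAt ℝ f (x, y)) :
    D2 f x y = rieszPrecomp (inr ℝ (E N) (E N)) (fderiv ℝ f (x, y)) := by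
  have h : HasFDerivAt (fun y' => f (x, y')) (fderiv ℝ f (x, y) ∘L inr ℝ (E N) (E N)) y :=
    hf.hasFDerivAt.comp y (hasFDerivAt_prodMk_right x y)
  rw [D2, gradient, h.fderiv]
  rfl

variable {Q P : Z → E N} {z : Z}

lemma hasFDerivAt_D1_comp (hf : ContDiff ℝ 2 f) (hQ : DifferentiableAt ℝ Q z)
    (hP : DifferentiableAt ℝ P z) :
    HasFDerivAt (fun z => D1 f (Q z) (P z)) (rieszPrecomp (inl ℝ (E N) (E N)) ∘L
      fderiv ℝ (fderiv ℝ f) (Q z, P z) ∘L (fderiv ℝ Q z).prod (fderiv ℝ P z)) z := by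
  have hD1 : (fun z => D1 f (Q z) (P z))
      = rieszPrecomp (inl ℝ (E N) (E N)) ∘ fderiv ℝ f ∘ fun z => (Q z, P z) :=
    funext fun z => D1_eq_rieszPrecomp (hf.differentiable (by norm_num) _)
  have hf' : Differentiable ℝ (fderiv ℝ f) :=
    (hf.fderiv_right (m := 1) (by norm_num)).differentiable (by norm_num)
  rw [hD1]
  exact (rieszPrecomp _).hasFDerivAt.comp z
    ((hf' _).hasFDerivAt.comp z (hQ.hasFDerivAt.prodMk hP.hasFDerivAt))

lemma hasFDerivAt_D2_comp (hf : ContDiff ℝ 2 f) (hQ : DifferentiableAt ℝ Q z)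
    (hP : DifferentiableAt ℝ P z) :
    HasFDerivAt (fun z => D2 f (Q z) (P z)) (rieszPrecomp (inr ℝ (E N) (E N)) ∘L
      fderiv ℝ (fderiv ℝ f) (Q z, P z) ∘L (fderiv ℝ Q z).prod (fderiv ℝ P z)) z := by
  have hD2 : (fun z => D2 f (Q z) (P z))
      = rieszPrecomp (inr ℝ (E N) (E N)) ∘ fderiv ℝ f ∘ fun z => (Q z, P z) :=
    funext fun z => D2_eq_rieszPrecomp (hf.differentiable (by norm_num) _)
  have hf' : Differentiable ℝ (fderiv ℝ f) :=
    (hf.fderiv_right (m := 1) (by norm_num)).differentiable (by norm_num)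
  rw [hD2]
  exact (rieszPrecomp _).hasFDerivAt.comp z
    ((hf' _).hasFDerivAt.comp z (hQ.hasFDerivAt.prodMk hP.hasFDerivAt))

lemma inner_fderiv_D1_add_inner_fderiv_D2_comm (hf : ContDiff ℝ 2 f)
    (hQ : DifferentiableAt ℝ Q z) (hP : DifferentiableAt ℝ P z) (u v : Z) :
    ⟪fderiv ℝ (fun z => D1 f (Q z) (P z)) z u, fderiv ℝ Q z v⟫
        + ⟪fderiv ℝ (fun z => D2 f (Q z) (P z)) z u, fderiv ℝ P z v⟫
      = ⟪fderiv ℝ (fun z => D1 f (Q z) (P z)) z v, fderiv ℝ Q z u⟫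
        + ⟪fderiv ℝ (fun z => D2 f (Q z) (P z)) z v, fderiv ℝ P z u⟫ := by
  have hessian : ∀ a b,
      ⟪fderiv ℝ (fun z => D1 f (Q z) (P z)) z a, fderiv ℝ Q z b⟫
        + ⟪fderiv ℝ (fun z => D2 f (Q z) (P z)) z a, fderiv ℝ P z b⟫
      = fderiv ℝ (fderiv ℝ f) (Q z, P z) (fderiv ℝ Q z a, fderiv ℝ P z a)
          (fderiv ℝ Q z b, fderiv ℝ P z b) := by
    intro a b
    simp only [(hasFDerivAt_D1_comp hf hQ hP).fderiv, (hasFDerivAt_D2_comp hf hQ hP).fderiv,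
      coe_comp, Function.comp_apply, prod_apply, inner_rieszPrecomp_apply, ← map_add, inl_apply,
      inr_apply, Prod.mk_add_mk, add_zero, zero_add]
  rw [hessian, hessian]
  exact hf.contDiffAt.isSymmSndFDerivAt (by simp) _ _

end PartialGradients

lemma HasFDerivAt.sum_smul_sum {ι σ Z F : Type*} [Fintype ι] [Fintype σ]
    [NormedAddCommGroup Z] [NormedSpace ℝ Z] [NormedAddCommGroup F] [NormedSpace ℝ F]
    (c : ι → ℝ) (d : ι → σ → ℝ) {G : ι → σ → Z → F} {G' : ι → σ → Z →L[ℝ] F} {z : Z}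
    (hG : ∀ x j, HasFDerivAt (G x j) (G' x j) z) :
    HasFDerivAt (fun z => ∑ x, c x • ∑ j, d x j • G x j z) (∑ x, c x • ∑ j, d x j • G' x j) z :=
  HasFDerivAt.fun_sum fun x _ =>
    (HasFDerivAt.fun_sum fun j _ => (hG x j).const_smul (d x j)).const_smul (c x)

lemma sum_smul_sum_smul_eq_sum_prod {ι σ R M : Type*} [Fintype ι] [Fintype σ] [Semiring R]
    [AddCommMonoid M] [Module R M] (c : ι → R) (d : ι → σ → R) (V : ι → σ → M) :
    ∑ x, c x • ∑ j, d x j • V x j = ∑ t : ι × σ, (c t.1 * d t.1 t.2) • V t.1 t.2 := by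
  rw [Fintype.sum_prod_type' fun x j => (c x * d x j) • V x j]
  simp only [smul_sum, smul_smul]

theorem Omega_fderiv_of_stage_equations {N : ℕ} {ι σ : Type*} [Fintype ι] [Fintype σ]
    (H : ι → E N × E N → ℝ) (hH : ∀ x, ContDiff ℝ 2 (H x)) (c : ι → ℝ) (w : ι → σ → ℝ)
    (A Abar : ι → σ → σ → ℝ)
    (hcond : ∀ x y i j, w x i * Abar y i j + w y j * A x j i = w x i * w y j)
    {U : Set (E N × E N)} (hU : IsOpen U) {Q P : σ → E N × E N → E N}
    (hQdiff : ∀ i, ∀ z ∈ U, DifferentiableAt ℝ (Q i) z)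
    (hPdiff : ∀ i, ∀ z ∈ U, DifferentiableAt ℝ (P i) z)
    (hQ : ∀ z ∈ U, ∀ i, Q i z = z.1 + ∑ x, c x • ∑ j, A x i j • D2 (H x) (Q j z) (P j z))
    (hP : ∀ z ∈ U, ∀ i, P i z = z.2 - ∑ x, c x • ∑ j, Abar x i j • D1 (H x) (Q j z) (P j z))
    {qplus pplus : E N × E N → E N}
    (hqp : ∀ z ∈ U, qplus z = z.1 + ∑ x, c x • ∑ i, w x i • D2 (H x) (Q i z) (P i z))
    (hpp : ∀ z ∈ U, pplus z = z.2 - ∑ x, c x • ∑ i, w x i • D1 (H x) (Q i z) (P i z))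
    {z : E N × E N} (hz : z ∈ U) (u v : E N × E N) :
    Omega (fderiv ℝ (fun z => (qplus z, pplus z)) z u)
      (fderiv ℝ (fun z => (qplus z, pplus z)) z v) = Omega u v := by
  set K : ι → σ → E N × E N →L[ℝ] E N :=
    fun x j => fderiv ℝ (fun z => D2 (H x) (Q j z) (P j z)) z
  set L : ι → σ → E N × E N →L[ℝ] E N :=
    fun x j => fderiv ℝ (fun z => D1 (H x) (Q j z) (P j z)) z
  have hK : ∀ x j, HasFDerivAt (fun z => D2 (H x) (Q j z) (P j z)) (K x j) z := fun x j =>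
    (hasFDerivAt_D2_comp (hH x) (hQdiff j z hz) (hPdiff j z hz)).differentiableAt.hasFDerivAt
  have hL : ∀ x j, HasFDerivAt (fun z => D1 (H x) (Q j z) (P j z)) (L x j) z := fun x j =>
    (hasFDerivAt_D1_comp (hH x) (hQdiff j z hz) (hPdiff j z hz)).differentiableAt.hasFDerivAt
  have hUz : U ∈ 𝓝 z := hU.mem_nhds hz
  have hQ' : ∀ i, HasFDerivAt (Q i) (fst ℝ _ _ + ∑ x, c x • ∑ j, A x i j • K x j) z :=
    fun i => (hasFDerivAt_fst.add (.sum_smul_sum c (A · i) hK)).congr_of_eventuallyEq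
      (Filter.eventually_of_mem hUz fun z hz => hQ z hz i)
  have hP' : ∀ i, HasFDerivAt (P i) (snd ℝ _ _ - ∑ x, c x • ∑ j, Abar x i j • L x j) z :=
    fun i => (hasFDerivAt_snd.sub (.sum_smul_sum c (Abar · i) hL)).congr_of_eventuallyEq
      (Filter.eventually_of_mem hUz fun z hz => hP z hz i)
  have hq' : HasFDerivAt qplus (fst ℝ _ _ + ∑ x, c x • ∑ i, w x i • K x i) z :=
    (hasFDerivAt_fst.add (.sum_smul_sum c w hK)).congr_of_eventuallyEq
      (Filter.eventually_of_mem hUz hqp)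
  have hp' : HasFDerivAt pplus (snd ℝ _ _ - ∑ x, c x • ∑ i, w x i • L x i) z :=
    (hasFDerivAt_snd.sub (.sum_smul_sum c w hL)).congr_of_eventuallyEq
      (Filter.eventually_of_mem hUz hpp)
  have hdQ : ∀ i u, fderiv ℝ (Q i) z u
      = u.1 + ∑ t : ι × σ, (c t.1 * A t.1 i t.2) • K t.1 t.2 u := by
    intro i u
    simp only [(hQ' i).fderiv, add_apply, coe_fst', sum_apply, smul_apply,
      sum_smul_sum_smul_eq_sum_prod]
  have hdP : ∀ i u, fderiv ℝ (P i) z u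
      = u.2 - ∑ t : ι × σ, (c t.1 * Abar t.1 i t.2) • L t.1 t.2 u := by
    intro i u
    simp only [(hP' i).fderiv, sub_apply, coe_snd', sum_apply, smul_apply,
      sum_smul_sum_smul_eq_sum_prod]
  rw [(hq'.prodMk hp').fderiv]
  simp only [Omega, prod_apply, add_apply, sub_apply, coe_fst', coe_snd', sum_apply, smul_apply,
    sum_smul_sum_smul_eq_sum_prod]
  exact symplecticForm_eq_of_linear_stages (τ := ι × σ) (fun t => c t.1 * w t.1 t.2)
    (fun t t' => c t'.1 * A t'.1 t.2 t'.2) (fun t t' => c t'.1 * Abar t'.1 t.2 t'.2)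
    (fun t t' => by linear_combination c t.1 * c t'.1 * hcond t.1 t'.1 t.2 t'.2) u v
    (fun t => K t.1 t.2 u) (fun t => K t.1 t.2 v) (fun t => L t.1 t.2 u) (fun t => L t.1 t.2 v)
    (fun t => fderiv ℝ (Q t.2) z u) (fun t => fderiv ℝ (Q t.2) z v)
    (fun t => fderiv ℝ (P t.2) z u) (fun t => fderiv ℝ (P t.2) z v)
    (fun t => hdQ t.2 u) (fun t => hdQ t.2 v) (fun t => hdP t.2 u) (fun t => hdP t.2 v)
    (fun t => inner_fderiv_D1_add_inner_fderiv_D2_comm (hH t.1) (hQdiff t.2 z hz)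
      (hPdiff t.2 z hz) u v)

theorem unforced_PRK_is_symplectic_general
    {N m s : ℕ}
    (Δt : ℝ) (ΔW : Fin m → ℝ)
    (H : E N × E N → ℝ) (h : Fin m → E N × E N → ℝ)
    (hH : ContDiff ℝ 2 H) (hh : ∀ r, ContDiff ℝ 2 (h r))
    (a abar b bbar : Fin s → Fin s → ℝ) (α β : Fin s → ℝ)
    (hc1 : ∀ i j, α i * abar i j + α j * a j i = α i * α j)
    (hc2 : ∀ i j, β i * bbar i j + β j * b j i = β i * β j)
    (hc3 : ∀ i j, β i * abar i j + α j * b j i = β i * α j)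
    (hc4 : ∀ i j, α i * bbar i j + β j * a j i = α i * β j)
    (U : Set (E N × E N)) (hU : IsOpen U)
    (Q P : Fin s → E N × E N → E N)
    (hQdiff : ∀ i, ∀ z ∈ U, DifferentiableAt ℝ (Q i) z)
    (hPdiff : ∀ i, ∀ z ∈ U, DifferentiableAt ℝ (P i) z)
    -- the unforced stage equations, with (q, p) = z:
    (hQ : ∀ z ∈ U, ∀ i, Q i z = z.1
        + Δt • ∑ j, a i j • D2 H (Q j z) (P j z)
        + ∑ r, ΔW r • ∑ j, b i j • D2 (h r) (Q j z) (P j z))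
    (hP : ∀ z ∈ U, ∀ i, P i z = z.2
        - Δt • ∑ j, abar i j • D1 H (Q j z) (P j z)
        - ∑ r, ΔW r • ∑ j, bbar i j • D1 (h r) (Q j z) (P j z))
    -- the update map φ = (q₊, p₊):
    (qplus pplus : E N × E N → E N)
    (hqp : ∀ z ∈ U, qplus z = z.1
        + Δt • ∑ i, α i • D2 H (Q i z) (P i z)
        + ∑ r, ΔW r • ∑ i, β i • D2 (h r) (Q i z) (P i z))
    (hpp : ∀ z ∈ U, pplus z = z.2
        - Δt • ∑ i, α i • D1 H (Q i z) (P i z)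
        - ∑ r, ΔW r • ∑ i, β i • D1 (h r) (Q i z) (P i z)) :
    ∀ z ∈ U, ∀ u v : E N × E N,
      Omega (fderiv ℝ (fun z : E N × E N => (qplus z, pplus z)) z u)
            (fderiv ℝ (fun z : E N × E N => (qplus z, pplus z)) z v)
        = Omega u v := by
  intro z hz u v
  have hHam : ∀ x : Option (Fin m), ContDiff ℝ 2 (x.elim H h) := by
    rintro (_ | r)
    exacts [hH, hh r]
  have hcond : ∀ (x y : Option (Fin m)) (i j : Fin s),
      x.elim α (fun _ => β) i * y.elim abar (fun _ => bbar) i j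
        + y.elim α (fun _ => β) j * x.elim a (fun _ => b) j i
      = x.elim α (fun _ => β) i * y.elim α (fun _ => β) j := by
    rintro (_ | _) (_ | _) i j
    exacts [hc1 i j, hc4 i j, hc3 i j, hc2 i j]
  refine Omega_fderiv_of_stage_equations (ι := Option (Fin m)) (fun x => x.elim H h) hHam
    (fun x => x.elim Δt ΔW) (fun x => x.elim α fun _ => β) (fun x => x.elim a fun _ => b)
    (fun x => x.elim abar fun _ => bbar) hcond hU hQdiff hPdiff ?_ ?_ ?_ ?_ hz u v
  · intro z hz i
    rw [hQ z hz i, Fintype.sum_option, add_assoc]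
    rfl
  · intro z hz i
    rw [hP z hz i, Fintype.sum_option, sub_sub]
    rfl
  · intro z hz
    rw [hqp z hz, Fintype.sum_option, add_assoc]
    rfl
  · intro z hz
    rw [hpp z hz, Fintype.sum_option, sub_sub]
    rfl

theorem unforced_PRK_is_symplectic
    {N m s : ℕ} (hN : 1 ≤ N) (hm : 1 ≤ m) (hs : 1 ≤ s)
    (Δt : ℝ) (ΔW : Fin m → ℝ)
    (H : E N × E N → ℝ) (h : Fin m → E N × E N → ℝ)
    (hH : ContDiff ℝ 2 H) (hh : ∀ r, ContDiff ℝ 2 (h r))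
    (a abar b bbar : Fin s → Fin s → ℝ) (α β : Fin s → ℝ)
    (hc1 : ∀ i j, α i * abar i j + α j * a j i = α i * α j)
    (hc2 : ∀ i j, β i * bbar i j + β j * b j i = β i * β j)
    (hc3 : ∀ i j, β i * abar i j + α j * b j i = β i * α j)
    (hc4 : ∀ i j, α i * bbar i j + β j * a j i = α i * β j)
    (U : Set (E N × E N)) (hU : IsOpen U)
    (Q P : Fin s → E N × E N → E N)
    (hQdiff : ∀ i, ∀ z ∈ U, DifferentiableAt ℝ (Q i) z)
    (hPdiff : ∀ i, ∀ z ∈ U, DifferentiableAt ℝ (P i) z)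
    -- the unforced stage equations, with (q, p) = z:
    (hQ : ∀ z ∈ U, ∀ i, Q i z = z.1
        + Δt • ∑ j, a i j • D2 H (Q j z) (P j z)
        + ∑ r, ΔW r • ∑ j, b i j • D2 (h r) (Q j z) (P j z))
    (hP : ∀ z ∈ U, ∀ i, P i z = z.2
        - Δt • ∑ j, abar i j • D1 H (Q j z) (P j z)
        - ∑ r, ΔW r • ∑ j, bbar i j • D1 (h r) (Q j z) (P j z))
    -- the update map φ = (q₊, p₊):
    (qplus pplus : E N × E N → E N)
    (hqp : ∀ z ∈ U, qplus z = z.1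
        + Δt • ∑ i, α i • D2 H (Q i z) (P i z)
        + ∑ r, ΔW r • ∑ i, β i • D2 (h r) (Q i z) (P i z))
    (hpp : ∀ z ∈ U, pplus z = z.2
        - Δt • ∑ i, α i • D1 H (Q i z) (P i z)
        - ∑ r, ΔW r • ∑ i, β i • D1 (h r) (Q i z) (P i z)) :
    ∀ z ∈ U, ∀ u v : E N × E N,
      Omega (fderiv ℝ (fun z : E N × E N => (qplus z, pplus z)) z u)
            (fderiv ℝ (fun z : E N × E N => (qplus z, pplus z)) z v)
        = Omega u v :=
  unforced_PRK_is_symplectic_general Δt ΔW H h hH hh a abar b bbar α β hc1 hc2 hc3 hc4 U hU Q P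
    hQdiff hPdiff hQ hP qplus pplus hqp hpp
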